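/- (Absence of cycles implies neighborhood stability.) Let Σ be a p×p positive definite matrix with unit diagonal (Σ_aa = 1 for all a), K = Σ⁻¹, and suppose there is 0 < v ≤ 1 with 1/K_aa ≥ v² for all a. Suppose the undirected graph on {1,…,p} with edge set {(a,b) : a ≠ b, K_ab ≠ 0} contains no cycles. Then for every node a and every b ∉ ne_a ∪ {a}, the vector θ^{b,ne_a} has at most one nonzero coordinate, its absolute value is at most √(1−v²), and consequently |S_a(b)| ≤ √(1−v²) < 1; in particular the neighborhood-stability condition |S_a(b)| < 1 holds for all nonneighboring pairs. -/

import Mathlib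

set_option autoImplicit false

open MeasureTheory ProbabilityTheory Real Filter Finset

noncomputable section

namespace MB

/-- The population prediction risk `E (X_a - ∑ k, θ k * X k)^2` for `X ~ N(0, S)`,
written in terms of the covariance matrix `S`. -/
def popRisk {q : ℕ} (S : Matrix (Fin q) (Fin q) ℝ) (a : Fin q) (θ : Fin q → ℝ) : ℝ :=
  S a a - 2 * ∑ k, θ k * S a k + ∑ k, ∑ l, θ k * S k l * θ l

/-- `θ` minimizes the population risk among vectors supported on `A`. -/
def IsPopMin {q : ℕ} (S : Matrix (Fin q) (Fin q) ℝ) (a : Fin q) (A : Set (Fin q))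
    (θ : Fin q → ℝ) : Prop :=
  (∀ k, k ∉ A → θ k = 0) ∧
    ∀ θ' : Fin q → ℝ, (∀ k, k ∉ A → θ' k = 0) → popRisk S a θ ≤ popRisk S a θ'

/-- The neighborhood of node `a` : nodes `b ≠ a` with a nonzero entry `K_{ab}` of the
inverse covariance matrix `K = S⁻¹`. -/
def neigh {q : ℕ} (S : Matrix (Fin q) (Fin q) ℝ) (a : Fin q) : Finset (Fin q) :=
  Finset.univ.filter fun b => b ≠ a ∧ S⁻¹ a b ≠ 0

/-- Optimal coefficients `θ^a` for prediction of `X_a` from all remaining variables: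
`θ^a_b = - K_{ab} / K_{aa}`. -/
def thetaA {q : ℕ} (S : Matrix (Fin q) (Fin q) ℝ) (a : Fin q) : Fin q → ℝ := fun b =>
  if b = a then 0 else -(S⁻¹ a b) / S⁻¹ a a

/-- Partial correlation `π_{ab} = - K_{ab} / sqrt (K_{aa} K_{bb})`. -/
def parcor {q : ℕ} (S : Matrix (Fin q) (Fin q) ℝ) (a b : Fin q) : ℝ :=
  -(S⁻¹ a b) / Real.sqrt (S⁻¹ a a * S⁻¹ b b)

/-- `S_a(b) = ∑_{k ∈ ne_a} sign (θ^{a,ne_a}_k) * θ^{b,ne_a}_k`, where `θp c A` denotes the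
population coefficient vector `θ^{c,A}`. -/
def Sfun {q : ℕ} (S : Matrix (Fin q) (Fin q) ℝ)
    (θp : Fin q → Set (Fin q) → Fin q → ℝ) (a b : Fin q) : ℝ :=
  ∑ k ∈ neigh S a,
    Real.sign (θp a (neigh S a : Set (Fin q)) k) * θp b (neigh S a : Set (Fin q)) k

/-- The empirical Lasso objective `n⁻¹ ‖X_a - X θ‖₂² + λ ‖θ‖₁`. -/
def lassoObj {n q : ℕ} (X : Fin n → Fin q → ℝ) (a : Fin q) (lam : ℝ) (θ : Fin q → ℝ) : ℝ :=
  (n : ℝ)⁻¹ * ∑ i, (X i a - ∑ k, X i k * θ k) ^ 2 + lam * ∑ k, |θ k|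

/-- `θ` is a Lasso solution with support restricted to `A`. -/
def IsLasso {n q : ℕ} (X : Fin n → Fin q → ℝ) (a : Fin q) (A : Set (Fin q)) (lam : ℝ)
    (θ : Fin q → ℝ) : Prop :=
  (∀ k, k ∉ A → θ k = 0) ∧
    ∀ θ' : Fin q → ℝ, (∀ k, k ∉ A → θ' k = 0) → lassoObj X a lam θ ≤ lassoObj X a lam θ'

/-- `θ` is a Lasso solution with support restricted to `A` and with coordinate `b`
pinned to the value `β`. -/
def IsLassoPinned {n q : ℕ} (X : Fin n → Fin q → ℝ) (a : Fin q) (A : Set (Fin q))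
    (b : Fin q) (β lam : ℝ) (θ : Fin q → ℝ) : Prop :=
  θ b = β ∧ (∀ k, k ∉ A → θ k = 0) ∧
    ∀ θ' : Fin q → ℝ, (θ' b = β ∧ ∀ k, k ∉ A → θ' k = 0) →
      lassoObj X a lam θ ≤ lassoObj X a lam θ'

/-- The gradient component `G_b(θ) = -2 n⁻¹ ⟨X_a - X θ, X_b⟩` of the quadratic part of
the Lasso objective. -/
def grad {n q : ℕ} (X : Fin n → Fin q → ℝ) (a : Fin q) (θ : Fin q → ℝ) (b : Fin q) : ℝ :=
  -2 * (n : ℝ)⁻¹ * ∑ i, (X i a - ∑ k, X i k * θ k) * X i b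

/-- `ν` is the centered Gaussian measure on `ℝ^q` with covariance matrix `S`,
characterized through its one-dimensional projections. -/
def IsGaussian {q : ℕ} (S : Matrix (Fin q) (Fin q) ℝ) (ν : Measure (Fin q → ℝ)) : Prop :=
  IsProbabilityMeasure ν ∧
    ∀ u : Fin q → ℝ,
      ν.map (fun x => ∑ i, u i * x i) =
        gaussianReal 0 (Real.toNNReal (∑ i, ∑ j, u i * S i j * u j))

/-- The standard normal c.d.f. `Φ`. -/
def stdGaussCdf (z : ℝ) : ℝ := ((gaussianReal 0 1) (Set.Iic z)).toReal

/-- The upper quantile function `Φ̃⁻¹` with `Φ̃ = 1 - Φ`. -/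
def upperQuantile (q : ℝ) : ℝ := sInf {z : ℝ | 1 - stdGaussCdf z ≤ q}

end MB

/-!
Let `A = ne_a` and let `T` be the set of vertices reachable from `b` along paths avoiding
`A ∪ {a}`. Solving `(K u)_T = -e_b` with `u` supported on `T` yields `θ = e_b + K u`: it vanishes
off `A`, because the rows of `K` outside `A ∪ T` vanish on `T`, and it satisfies the normal
equations on `A`, because `Σ θ = Σ e_b + u`; by strict convexity of the risk it is `θ^{b,A}`.
Its coordinate at `k ∈ A` is nonzero only if `k` is adjacent to `T`, and two such `k` would close
a cycle through `a`. A single coefficient `θ_k` then equals `Σ_bk`, so the risk is `1 - θ_k²`,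
while no predictor of `X_b` has risk below `1 / K_bb ≥ v²`.
-/

theorem abs_sum_sign_mul_le {ι : Type*} (s : Finset ι) (g : ι → ℝ) {f : ι → ℝ} {c : ℝ}
    (hf : {k | f k ≠ 0}.Subsingleton) (hfc : ∀ k, |f k| ≤ c) (hc : 0 ≤ c) :
    |∑ k ∈ s, Real.sign (g k) * f k| ≤ c := by
  by_cases h : ∃ k ∈ s, f k ≠ 0
  · obtain ⟨k, hks, hk⟩ := h
    have hzero : ∀ l ∈ s, l ≠ k → Real.sign (g l) * f l = 0 := fun l _ hlk =>
      mul_eq_zero_of_right _ (by_contra fun hl => hlk (hf hl hk))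
    have hsign : |Real.sign (g k)| ≤ 1 := by
      rcases Real.sign_apply_eq (g k) with h | h | h <;> simp [h]
    rw [Finset.sum_eq_single_of_mem k hks hzero, abs_mul]
    calc |Real.sign (g k)| * |f k| ≤ 1 * |f k| := by gcongr
      _ ≤ c := (one_mul _).trans_le (hfc k)
  · push Not at h
    rwa [Finset.sum_eq_zero fun k hk => by rw [h k hk, mul_zero], abs_zero]

namespace SimpleGraph

variable {V : Type*} {G : SimpleGraph V}

def reachableAvoiding (G : SimpleGraph V) (s : Set V) (b : V) : Set V :=
  {t | ∃ w : G.Walk b t, ∀ x ∈ w.support, x ∉ s}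

theorem mem_reachableAvoiding_self {s : Set V} {b : V} (hb : b ∉ s) :
    b ∈ G.reachableAvoiding s b :=
  ⟨.nil, by simpa using hb⟩

theorem notMem_of_mem_reachableAvoiding {s : Set V} {b t : V}
    (ht : t ∈ G.reachableAvoiding s b) : t ∉ s :=
  let ⟨w, hw⟩ := ht
  hw t w.end_mem_support

theorem mem_reachableAvoiding_of_adj {s : Set V} {b t l : V}
    (ht : t ∈ G.reachableAvoiding s b) (hadj : G.Adj t l) (hl : l ∉ s) :
    l ∈ G.reachableAvoiding s b := by
  obtain ⟨w, hw⟩ := ht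
  refine ⟨w.concat hadj, fun x hx => ?_⟩
  rw [Walk.support_concat, List.mem_append, List.mem_singleton] at hx
  rcases hx with hx | rfl
  exacts [hw x hx, hl]

theorem IsAcyclic.eq_of_adj_of_walk (hG : G.IsAcyclic) {a k₁ k₂ : V} (h₁ : G.Adj a k₁)
    (h₂ : G.Adj a k₂) (w : G.Walk k₁ k₂) (ha : a ∉ w.support) : k₁ = k₂ := by
  classical
  have hpath : (Walk.cons h₁ w.bypass).IsPath :=
    w.bypass_isPath.cons fun h => ha (w.support_bypass_subset_support h)
  simpa using (hG.eq_snd_of_adj_start hpath h₂ (Walk.end_mem_support _)).symm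

theorem IsAcyclic.eq_of_adj_of_adj_mem_reachableAvoiding (hG : G.IsAcyclic) {s : Set V}
    {a b k₁ k₂ t₁ t₂ : V} (ha : a ∈ s) (hk₁ : G.Adj a k₁) (hk₂ : G.Adj a k₂)
    (ht₁ : t₁ ∈ G.reachableAvoiding s b) (ht₂ : t₂ ∈ G.reachableAvoiding s b)
    (h₁ : G.Adj k₁ t₁) (h₂ : G.Adj k₂ t₂) : k₁ = k₂ := by
  obtain ⟨w₁, hw₁⟩ := ht₁
  obtain ⟨w₂, hw₂⟩ := ht₂
  refine hG.eq_of_adj_of_walk hk₁ hk₂ (.cons h₁ (w₁.reverse.append (w₂.concat h₂.symm))) ?_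
  simp only [Walk.support_cons, Walk.support_append, Walk.support_reverse, Walk.support_concat,
    List.mem_cons, List.mem_append, List.mem_reverse, not_or]
  refine ⟨hk₁.ne, fun h => hw₁ a h ha, fun h => ?_⟩
  rcases List.mem_append.mp (List.mem_of_mem_tail h) with h | h
  exacts [hw₂ a h ha, hk₂.ne (List.mem_singleton.mp h)]

end SimpleGraph

namespace Matrix

section

variable {ι R : Type*} [Zero R]

def supportGraph (K : Matrix ι ι R) : SimpleGraph ι where
  Adj i j := i ≠ j ∧ K i j ≠ 0 ∧ K j i ≠ 0
  symm := ⟨fun _ _ h => ⟨h.1.symm, h.2.2, h.2.1⟩⟩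
  loopless := ⟨fun _ h => h.1 rfl⟩

theorem supportGraph_adj_of_isSymm {K : Matrix ι ι R} (hK : K.IsSymm) {i j : ι} (hij : i ≠ j)
    (h : K i j ≠ 0) : K.supportGraph.Adj i j :=
  ⟨hij, h, hK.apply i j ▸ h⟩

end

variable {ι : Type*} [Fintype ι]

theorem PosDef.exists_mulVec_eq_on {K : Matrix ι ι ℝ} (hK : K.PosDef) (T : Set ι)
    (f : ι → ℝ) : ∃ u : ι → ℝ, (∀ i ∉ T, u i = 0) ∧ ∀ t ∈ T, (K *ᵥ u) t = f t := by
  classical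
  let K' : Matrix T T ℝ := K.submatrix (↑) (↑)
  have hK' : IsUnit K'.det :=
    (isUnit_iff_isUnit_det K').mp (hK.submatrix Subtype.val_injective).isUnit
  let u' : T → ℝ := K'⁻¹ *ᵥ fun t => f t
  let u : ι → ℝ := fun i => if h : i ∈ T then u' ⟨i, h⟩ else 0
  refine ⟨u, fun i hi => dif_neg hi, fun t ht => ?_⟩
  have hrestrict : (K *ᵥ u) t = (K' *ᵥ u') ⟨t, ht⟩ := by
    have hout : ∀ x : {x // x ∉ T}, K t x * u x = 0 := fun x => by simp [u, x.2]
    rw [mulVec, dotProduct, ← Fintype.sum_subtype_add_sum_subtype (· ∈ T)]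
    simp only [hout, Finset.sum_const_zero, add_zero]
    simp [u, K', mulVec, dotProduct]
  rw [hrestrict, mulVec_mulVec, mul_nonsing_inv _ hK', one_mulVec]

variable [DecidableEq ι]

theorem PosDef.inv_apply_self_inv_mul_sq_le {S : Matrix ι ι ℝ} (hS : S.PosDef) (y : ι → ℝ)
    (b : ι) : (S⁻¹ b b)⁻¹ * y b ^ 2 ≤ y ⬝ᵥ (S *ᵥ y) := by
  have hsymm : S.IsSymm := isHermitian_iff_isSymm.mp hS.isHermitian
  set k := S⁻¹ *ᵥ Pi.single b 1
  have hSk : S *ᵥ k = Pi.single b 1 := by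
    rw [mulVec_mulVec, mul_nonsing_inv _ ((isUnit_iff_isUnit_det S).mp hS.isUnit), one_mulVec]
  have hyk : y ⬝ᵥ (S *ᵥ k) = y b := by rw [hSk, dotProduct_single, mul_one]
  have hky : k ⬝ᵥ (S *ᵥ y) = y b := by
    rw [dotProduct_mulVec, ← mulVec_transpose, hsymm.eq, hSk, single_dotProduct, one_mul]
  have hkk : k ⬝ᵥ (S *ᵥ k) = S⁻¹ b b := by
    rw [hSk, dotProduct_single, mul_one]; simp [k]
  have hKbb : 0 < S⁻¹ b b := hS.inv.diag_pos
  set c := (S⁻¹ b b)⁻¹ * y b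
  have hsq : 0 ≤ (y - c • k) ⬝ᵥ (S *ᵥ (y - c • k)) := by
    simpa using hS.posSemidef.dotProduct_mulVec_nonneg (y - c • k)
  simp only [mulVec_sub, mulVec_smul, dotProduct_sub, sub_dotProduct, dotProduct_smul,
    smul_dotProduct, smul_eq_mul, hyk, hky, hkk] at hsq
  have hc : c * (c * S⁻¹ b b) = (S⁻¹ b b)⁻¹ * y b ^ 2 := by
    simp only [c]; field_simp
  nlinarith

theorem PosDef.exists_normal_solution_of_separated {S : Matrix ι ι ℝ} (hS : S.PosDef)
    {A T : Set ι} {b : ι} (hb : b ∈ T) (hAT : Disjoint A T)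
    (hsep : ∀ l ∉ A, l ∉ T → ∀ t ∈ T, S⁻¹ l t = 0) :
    ∃ θ : ι → ℝ, (∀ k ∉ A, θ k = 0) ∧ (∀ k ∈ A, (S *ᵥ θ) k = S b k) ∧
      ∀ k, θ k ≠ 0 → ∃ t ∈ T, S⁻¹ k t ≠ 0 := by
  obtain ⟨u, hu, hKu⟩ := hS.inv.exists_mulVec_eq_on T (-Pi.single b 1)
  set θ := Pi.single b 1 + S⁻¹ *ᵥ u
  have hθT : ∀ k ∈ T, θ k = 0 := fun k hk => by simp [θ, hKu k hk]
  have hθ : ∀ k ∉ A, θ k = 0 := by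
    intro k hkA
    by_cases hkT : k ∈ T
    · exact hθT k hkT
    have hKu_k : (S⁻¹ *ᵥ u) k = 0 := Finset.sum_eq_zero fun t _ => by
      by_cases ht : t ∈ T
      exacts [mul_eq_zero_of_left (hsep k hkA hkT t ht) _, mul_eq_zero_of_right _ (hu t ht)]
    simp [θ, hKu_k, show k ≠ b from fun h => hkT (h ▸ hb)]
  refine ⟨θ, hθ, fun k hk => ?_, fun k hk => ?_⟩
  · have hSθ : S *ᵥ θ = S.col b + u := by
      rw [mulVec_add, mulVec_single_one, mulVec_mulVec,
        mul_nonsing_inv _ ((isUnit_iff_isUnit_det S).mp hS.isUnit), one_mulVec]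
    rw [hSθ, Pi.add_apply, hu k (hAT.notMem_of_mem_left hk), add_zero, col_apply,
      (isHermitian_iff_isSymm.mp hS.isHermitian).apply]
  · have hkb : k ≠ b := fun h => hk (h ▸ hθT b hb)
    have hKu_k : ∑ t, S⁻¹ k t * u t ≠ 0 := by simpa [θ, hkb, mulVec, dotProduct] using hk
    obtain ⟨t, -, ht⟩ := Finset.exists_ne_zero_of_sum_ne_zero hKu_k
    exact ⟨t, by_contra fun htT => ht (by rw [hu t htT, mul_zero]), left_ne_zero_of_mul ht⟩

end Matrix

namespace MB

open Matrix SimpleGraph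

variable {q : ℕ} {S : Matrix (Fin q) (Fin q) ℝ} {b : Fin q}

theorem popRisk_eq_dotProduct (θ : Fin q → ℝ) :
    popRisk S b θ = S b b - 2 * (θ ⬝ᵥ S b) + θ ⬝ᵥ (S *ᵥ θ) := by
  simp only [popRisk, dotProduct, mulVec, Finset.mul_sum, mul_assoc]

theorem popRisk_add (hS : S.IsSymm) (θ d : Fin q → ℝ) :
    popRisk S b (θ + d) =
      popRisk S b θ + d ⬝ᵥ (S *ᵥ d) + 2 * (d ⬝ᵥ (S *ᵥ θ - S b)) := by
  have hcomm : θ ⬝ᵥ (S *ᵥ d) = d ⬝ᵥ (S *ᵥ θ) := by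
    rw [dotProduct_mulVec, ← mulVec_transpose, hS.eq, dotProduct_comm]
  simp only [popRisk_eq_dotProduct, mulVec_add, dotProduct_add, add_dotProduct, dotProduct_sub]
  linear_combination hcomm

theorem inv_apply_self_inv_le_popRisk (hS : S.PosDef) {θ : Fin q → ℝ} (hθ : θ b = 0) :
    (S⁻¹ b b)⁻¹ ≤ popRisk S b θ := by
  have hsymm : S.IsSymm := isHermitian_iff_isSymm.mp hS.isHermitian
  -- `e_b` has zero risk and satisfies the normal equations, so the risk is a quadratic form
  have hrisk : popRisk S b θ = (θ - Pi.single b 1) ⬝ᵥ (S *ᵥ (θ - Pi.single b 1)) := by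
    have hnormal : S *ᵥ Pi.single b 1 - S b = 0 := by
      ext i; simp [hsymm.apply b i]
    have h := popRisk_add hsymm (b := b) (Pi.single b 1) (θ - Pi.single b 1)
    rw [add_sub_cancel, hnormal, dotProduct_zero] at h
    rw [h, popRisk_eq_dotProduct]
    simp only [single_dotProduct, mulVec_single_one, col_apply]
    ring
  have h := hS.inv_apply_self_inv_mul_sq_le (θ - Pi.single b 1) b
  rwa [← hrisk, Pi.sub_apply, hθ, Pi.single_eq_same, zero_sub, neg_one_sq, mul_one] at h

theorem IsPopMin.eq_of_normal (hS : S.PosDef) {A : Set (Fin q)} {θ θ' : Fin q → ℝ}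
    (hθ' : IsPopMin S b A θ') (hθA : ∀ k ∉ A, θ k = 0)
    (hθ : ∀ k ∈ A, (S *ᵥ θ) k = S b k) : θ' = θ := by
  set d := θ' - θ
  have hcross : d ⬝ᵥ (S *ᵥ θ - S b) = 0 := Finset.sum_eq_zero fun k _ => by
    by_cases hk : k ∈ A
    · simp [hθ k hk]
    · simp [d, hθ'.1 k hk, hθA k hk]
  have hle := hθ'.2 θ hθA
  rw [← add_sub_cancel θ θ', popRisk_add (isHermitian_iff_isSymm.mp hS.isHermitian), hcross]
    at hle
  have hd : d = 0 := by
    by_contra hd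
    have := hS.dotProduct_mulVec_pos hd
    simp only [star_trivial] at this
    linarith
  exact sub_eq_zero.mp hd

theorem popRisk_single (k : Fin q) (c : ℝ) :
    popRisk S b (Pi.single k c) = S b b - 2 * c * S b k + c ^ 2 * S k k := by
  simp only [popRisk, Pi.single_apply, ite_mul, zero_mul, sum_ite_eq', mem_univ, ↓reduceIte,
    mul_ite, mul_zero]
  ring

theorem coe_neigh_eq_neighborSet (hS : S.PosDef) (a : Fin q) :
    (neigh S a : Set (Fin q)) = S⁻¹.supportGraph.neighborSet a := by
  ext k
  have hK : S⁻¹ k a = S⁻¹ a k := (isHermitian_iff_isSymm.mp hS.inv.isHermitian).apply a k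
  simp [neigh, supportGraph, hK, ne_comm]

theorem exists_normal_solution_of_isAcyclic (hS : S.PosDef)
    (hG : S⁻¹.supportGraph.IsAcyclic) {a : Fin q} (hba : b ≠ a) (hb : b ∉ neigh S a) :
    ∃ θ : Fin q → ℝ, (∀ k ∉ (neigh S a : Set (Fin q)), θ k = 0) ∧
      (∀ k ∈ (neigh S a : Set (Fin q)), (S *ᵥ θ) k = S b k) ∧ {k | θ k ≠ 0}.Subsingleton := by
  have hK : S⁻¹.IsSymm := isHermitian_iff_isSymm.mp hS.inv.isHermitian
  rw [← Finset.mem_coe, coe_neigh_eq_neighborSet hS] at hb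
  rw [coe_neigh_eq_neighborSet hS]
  set G := S⁻¹.supportGraph
  set N := G.neighborSet a
  set T := G.reachableAvoiding (insert a N) b
  have hbT : b ∈ T := mem_reachableAvoiding_self (by simp [hba, hb])
  have hNT : Disjoint N T := Set.disjoint_right.mpr fun _ ht hN =>
    notMem_of_mem_reachableAvoiding ht (Set.mem_insert_of_mem a hN)
  have hsep : ∀ l ∉ N, l ∉ T → ∀ t ∈ T, S⁻¹ l t = 0 := by
    intro l hlN hlT t ht
    by_contra hlt
    have hadj : G.Adj t l :=
      supportGraph_adj_of_isSymm hK (fun h => hlT (h ▸ ht)) (hK.apply l t ▸ hlt)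
    have hla : l ≠ a := by
      rintro rfl
      exact hNT.notMem_of_mem_right ht hadj.symm
    exact hlT (mem_reachableAvoiding_of_adj ht hadj (by simp [hla, hlN]))
  obtain ⟨θ, hθN, hθnormal, hθT⟩ := hS.exists_normal_solution_of_separated hbT hNT hsep
  have hattach : ∀ k, θ k ≠ 0 → G.Adj a k ∧ ∃ t ∈ T, G.Adj k t := fun k hk => by
    have hkN : k ∈ N := by_contra fun h => hk (hθN k h)
    obtain ⟨t, ht, hkt⟩ := hθT k hk
    exact ⟨hkN, t, ht,
      supportGraph_adj_of_isSymm hK (fun h => hNT.notMem_of_mem_left hkN (h ▸ ht)) hkt⟩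
  refine ⟨θ, hθN, hθnormal, fun k₁ hk₁ k₂ hk₂ => ?_⟩
  obtain ⟨ha₁, t₁, ht₁, h₁⟩ := hattach k₁ hk₁
  obtain ⟨ha₂, t₂, ht₂, h₂⟩ := hattach k₂ hk₂
  exact hG.eq_of_adj_of_adj_mem_reachableAvoiding (Set.mem_insert a N) ha₁ ha₂ ht₁ ht₂ h₁ h₂

theorem sq_le_one_sub_of_normal_of_subsingleton (hS : S.PosDef) (hdiag : ∀ i, S i i = 1)
    {θ : Fin q → ℝ} (hθ : {k | θ k ≠ 0}.Subsingleton) (hθb : θ b = 0) {k : Fin q}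
    (hk : θ k ≠ 0) (hnormal : (S *ᵥ θ) k = S b k) : θ k ^ 2 ≤ 1 - (S⁻¹ b b)⁻¹ := by
  have hθk : θ = Pi.single k (θ k) := funext fun l => by
    by_cases hl : l = k
    · subst hl; simp
    · rw [Pi.single_eq_of_ne hl]
      exact by_contra fun h => hl (hθ h hk)
  have hrisk := inv_apply_self_inv_le_popRisk hS hθb
  rw [hθk, popRisk_single, hdiag, hdiag] at hrisk
  rw [hθk] at hnormal
  simp only [mulVec_single, Pi.smul_apply, col_apply, hdiag, MulOpposite.smul_eq_mul_unop,
    MulOpposite.unop_op, one_mul] at hnormal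
  rw [← hnormal] at hrisk
  linarith

end MB

theorem no_cycles_implies_neighborhood_stability_general
    (P : ℕ) (S : Matrix (Fin P) (Fin P) ℝ) (hS : S.PosDef)
    (hdiag : ∀ a : Fin P, S a a = 1)
    (v : ℝ) (hv0 : 0 < v)
    (hvar : ∀ a : Fin P, v ^ 2 ≤ (S⁻¹ a a)⁻¹)
    (θpop : Fin P → Set (Fin P) → Fin P → ℝ)
    (hθpop : ∀ (c : Fin P) (A : Set (Fin P)), MB.IsPopMin S c A (θpop c A))
    (hacyclic :
      (SimpleGraph.mk (fun i j : Fin P => i ≠ j ∧ S⁻¹ i j ≠ 0 ∧ S⁻¹ j i ≠ 0)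
        ⟨fun i j h => ⟨h.1.symm, h.2.2, h.2.1⟩⟩ ⟨fun i h => h.1 rfl⟩).IsAcyclic) :
    ∀ a b : Fin P, b ≠ a → b ∉ MB.neigh S a →
      {k : Fin P | θpop b (MB.neigh S a : Set (Fin P)) k ≠ 0}.Subsingleton ∧
      (∀ k : Fin P, |θpop b (MB.neigh S a : Set (Fin P)) k| ≤ Real.sqrt (1 - v ^ 2)) ∧
      |MB.Sfun S θpop a b| ≤ Real.sqrt (1 - v ^ 2) ∧
      Real.sqrt (1 - v ^ 2) < 1 := by
  intro a b hba hb
  obtain ⟨θ, hθA, hθnormal, hθsub⟩ := MB.exists_normal_solution_of_isAcyclic hS hacyclic hba hb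
  have hθ : θpop b (MB.neigh S a) = θ := (hθpop b _).eq_of_normal hS hθA hθnormal
  have hcoord : ∀ k, |θ k| ≤ √(1 - v ^ 2) := by
    intro k
    by_cases hk : θ k = 0
    · simp [hk]
    have hkA : k ∈ (MB.neigh S a : Set (Fin P)) := by_contra fun h => hk (hθA k h)
    have hsq := MB.sq_le_one_sub_of_normal_of_subsingleton hS hdiag hθsub (hθA b hb) hk
      (hθnormal k hkA)
    exact Real.abs_le_sqrt (by linarith [hvar b])
  refine ⟨hθ ▸ hθsub, hθ ▸ hcoord, ?_, ?_⟩
  · rw [MB.Sfun, hθ]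
    exact abs_sum_sign_mul_le _ _ hθsub hcoord (Real.sqrt_nonneg _)
  · rw [Real.sqrt_lt' one_pos]
    nlinarith

/-- **Absence of cycles implies neighborhood stability.** If `Σ` is positive definite with
unit diagonal, conditional variances bounded below by `v² > 0`, and the associated
conditional independence graph contains no cycles, then for nonneighboring `a, b` the
vector `θ^{b,ne_a}` has at most one nonzero coordinate, bounded in absolute value by
`√(1 - v²)`, and `|S_a(b)| ≤ √(1 - v²) < 1`. -/
theorem no_cycles_implies_neighborhood_stability
    (P : ℕ) (S : Matrix (Fin P) (Fin P) ℝ) (hS : S.PosDef)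
    (hdiag : ∀ a : Fin P, S a a = 1)
    (v : ℝ) (hv0 : 0 < v) (hv1 : v ≤ 1)
    (hvar : ∀ a : Fin P, v ^ 2 ≤ (S⁻¹ a a)⁻¹)
    (θpop : Fin P → Set (Fin P) → Fin P → ℝ)
    (hθpop : ∀ (c : Fin P) (A : Set (Fin P)), MB.IsPopMin S c A (θpop c A))
    (hacyclic :
      (SimpleGraph.mk (fun i j : Fin P => i ≠ j ∧ S⁻¹ i j ≠ 0 ∧ S⁻¹ j i ≠ 0)
        ⟨fun i j h => ⟨h.1.symm, h.2.2, h.2.1⟩⟩ ⟨fun i h => h.1 rfl⟩).IsAcyclic) :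
    ∀ a b : Fin P, b ≠ a → b ∉ MB.neigh S a →
      {k : Fin P | θpop b (MB.neigh S a : Set (Fin P)) k ≠ 0}.Subsingleton ∧
      (∀ k : Fin P, |θpop b (MB.neigh S a : Set (Fin P)) k| ≤ Real.sqrt (1 - v ^ 2)) ∧
      |MB.Sfun S θpop a b| ≤ Real.sqrt (1 - v ^ 2) ∧
      Real.sqrt (1 - v ^ 2) < 1 :=
  no_cycles_implies_neighborhood_stability_general P S hS hdiag v hv0 hvar θpop hθpop hacyclic
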